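/- Let G be the X-flip of a path P for a set X ⊆ V(P). Let a, b ∈ X with N_P[a] ∩ N_P[b] = ∅, and let P' be the path obtained from P − {a,b} by making each of N_P(a) and N_P(b) a clique. Then G∧ab − {a,b} is the (X △ N_P[{a,b}])-flip of P'. -/

import Mathlib

open SimpleGraph

universe u v

/-! ### Basic graph operations: flips, local complementation, pivoting, pivot-minors -/

/-- Flip the adjacency of `G` exactly at the pairs of distinct vertices where the
(symmetrized) predicate `p` holds. -/
def sdFlip {V : Type u} (G : SimpleGraph V) (p : V → V → Prop) : SimpleGraph V where
  Adj x y := x ≠ y ∧ Xor' (G.Adj x y) (p x y ∨ p y x)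
  symm := by
    constructor
    intro x y h
    refine ⟨h.1.symm, ?_⟩
    have h2 := h.2
    rwa [G.adj_comm x y, or_comm] at h2
  loopless := by
    constructor
    intro x h
    exact h.1 rfl

/-- Local complementation `G * v`: complement the adjacency inside the neighborhood of `v`. -/
def localComp {V : Type u} (G : SimpleGraph V) (v : V) : SimpleGraph V :=
  sdFlip G (fun x y => G.Adj v x ∧ G.Adj v y)

/-- Pivoting an edge `uv`: `G ∧ uv = G * u * v * u`. -/
def pivot {V : Type u} (G : SimpleGraph V) (u v : V) : SimpleGraph V :=
  localComp (localComp (localComp G u) v) u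

/-- Applying a sequence of pivots. -/
def pivotSeq {V : Type u} (G : SimpleGraph V) : List (V × V) → SimpleGraph V
  | [] => G
  | e :: l => pivotSeq (pivot G e.1 e.2) l

/-- Each pivot in the sequence is performed on an edge of the current graph. -/
def ValidPivots {V : Type u} (G : SimpleGraph V) : List (V × V) → Prop
  | [] => True
  | e :: l => G.Adj e.1 e.2 ∧ ValidPivots (pivot G e.1 e.2) l

/-- `H` is a pivot-minor of `G`: `H` is isomorphic to a graph obtained from `G` by a sequence of
pivotings (on edges of the current graph) and vertex deletions. -/
def IsPivotMinorOf {W : Type v} {V : Type u} (H : SimpleGraph W) (G : SimpleGraph V) : Prop :=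
  ∃ (l : List (V × V)) (S : Set V), ValidPivots G l ∧
    Nonempty (H ≃g (pivotSeq G l).induce S)

/-! ### The half-graph join `G △ H` -/

/-- `G △ H`: the disjoint union of `G` and `H` together with the half graph joining them:
the `i`-th vertex of `G` is adjacent to the `j`-th vertex of `H` iff `i ≥ j`. -/
def halfJoin {n : ℕ} (G H : SimpleGraph (Fin n)) : SimpleGraph (Fin n ⊕ Fin n) where
  Adj x y :=
    match x, y with
    | Sum.inl i, Sum.inl i' => G.Adj i i'
    | Sum.inr j, Sum.inr j' => H.Adj j j'
    | Sum.inl i, Sum.inr j => j ≤ i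
    | Sum.inr j, Sum.inl i => j ≤ i
  symm := by
    constructor
    rintro (i | i) (j | j) h
    · exact G.adj_symm h
    · exact h
    · exact h
    · exact H.adj_symm h
  loopless := by
    constructor
    rintro (i | i) h
    · exact G.irrefl h
    · exact H.irrefl h

/-! ### Flips by a set, by a pair of sets, and by a collection of sets -/

/-- The `X`-flip of `G`: complement the adjacency inside `X`. (The `∅`-flip is `G` itself.) -/
def setFlip {V : Type u} (G : SimpleGraph V) (X : Set V) : SimpleGraph V :=
  sdFlip G (fun x y => x ∈ X ∧ y ∈ X)

/-- `G * (X, Y)`: complement the adjacency between `X` and `Y`. -/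
def pairFlip {V : Type u} (G : SimpleGraph V) (X Y : Set V) : SimpleGraph V :=
  sdFlip G (fun x y => x ∈ X ∧ y ∈ Y)

open Classical in
/-- The member of the collection `P` containing `v`, if any, and `{v}` otherwise. -/
noncomputable def blockOf {V : Type u} (P : Set (Set V)) (v : V) : Set V :=
  if h : ∃ X ∈ P, v ∈ X then h.choose else {v}

/-- A subset `F ⊆ P²` is symmetric if `(X,X') ∈ F` implies `(X',X) ∈ F`. -/
def SymmRelSet {α : Type u} (F : Set (α × α)) : Prop :=
  ∀ a b : α, (a, b) ∈ F → (b, a) ∈ F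

/-- The `(P,F)`-flip `H ⊕ (P,F)` of `H`: distinct vertices `u,v` are adjacent iff
`H.Adj u v` XOR `(P(u), P(v)) ∈ F`. -/
noncomputable def collFlip {V : Type u} (H : SimpleGraph V) (P : Set (Set V))
    (F : Set (Set V × Set V)) : SimpleGraph V :=
  sdFlip H (fun x y => (blockOf P x, blockOf P y) ∈ F)

/-- `P` is a collection of pairwise disjoint non-empty subsets. -/
def IsDisjNonemptyColl {V : Type u} (P : Set (Set V)) : Prop :=
  (∀ X ∈ P, X.Nonempty) ∧ P.PairwiseDisjoint id

/-- `Q` is a coarsening of `P`: a collection of disjoint non-empty sets,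
each a union of members of `P`. -/
def IsCoarsening {α : Type u} (Q P : Set (Set α)) : Prop :=
  IsDisjNonemptyColl Q ∧ ∀ X ∈ Q, ∃ C ⊆ P, X = ⋃₀ C

/-! ### The graph `mPₙ` and flipped `mPₙ`'s -/

/-- `mPₙ`: the disjoint union of `m` copies of the path `Pₙ`, with vertex set `[m] × [n]`. -/
def pathsGraph (m n : ℕ) : SimpleGraph (Fin m × Fin n) where
  Adj x y := x.1 = y.1 ∧ (pathGraph n).Adj x.2 y.2
  symm := by
    constructor
    rintro ⟨i, a⟩ ⟨j, b⟩ ⟨h1, h2⟩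
    exact ⟨h1.symm, (pathGraph n).adj_symm h2⟩
  loopless := by
    constructor
    rintro ⟨i, a⟩ ⟨_, h⟩
    exact (pathGraph n).irrefl h

/-- The `j`-th column of `mPₙ`. -/
def column (m n : ℕ) (j : Fin n) : Set (Fin m × Fin n) := {p | p.2 = j}

/-- The column set of `mPₙ`. -/
def columnSet (m n : ℕ) : Set (Set (Fin m × Fin n)) := Set.range (column m n)

/-- A flipped `mPₙ`: a `P`-flip of `mPₙ` where `P` is a coarsening of the column set. -/
def IsFlippedPaths (m n : ℕ) (G : SimpleGraph (Fin m × Fin n)) : Prop :=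
  ∃ (P : Set (Set (Fin m × Fin n))) (F : Set (Set (Fin m × Fin n) × Set (Fin m × Fin n))),
    IsCoarsening P (columnSet m n) ∧ F ⊆ P ×ˢ P ∧ SymmRelSet F ∧
    G = collFlip (pathsGraph m n) P F

/-- A `k`-flipped `mPₙ`: a flipped `mPₙ` with `|P| ≤ k`. -/
def IsKFlippedPaths (k m n : ℕ) (G : SimpleGraph (Fin m × Fin n)) : Prop :=
  ∃ (P : Set (Set (Fin m × Fin n))) (F : Set (Set (Fin m × Fin n) × Set (Fin m × Fin n))),
    IsCoarsening P (columnSet m n) ∧ P.ncard ≤ k ∧ F ⊆ P ×ˢ P ∧ SymmRelSet F ∧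
    G = collFlip (pathsGraph m n) P F

/-! ### Cut-rank and rank-depth -/

open Classical in
/-- The cut-rank `ρ_G(S)`: the rank over GF(2) of the `S × (V ∖ S)` submatrix of the
adjacency matrix of `G`. -/
noncomputable def cutRank {V : Type u} [Fintype V] (G : SimpleGraph V) (S : Set V) : ℕ :=
  Matrix.rank (Matrix.of fun (i : S) (j : (Sᶜ : Set V)) =>
    if G.Adj (i : V) (j : V) then (1 : ZMod 2) else 0)

/-- The rank-depth of `G`: the least `k` such that `G` has a decomposition `(T, σ)` into a
tree `T` with the vertices of `G` identified with the leaves of `T` via `σ`, of width at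
most `k` and radius at most `k`.  The width condition is expressed as: for every non-leaf
node `v` of `T` and every set `S ⊆ V(G)` that is a union of parts of the partition of `V(G)`
induced by the components of `T - v`, we have `ρ_G(S) ≤ k`. -/
noncomputable def rankDepth {V : Type u} [Fintype V] (G : SimpleGraph V) : ℕ :=
  sInf {k : ℕ |
    ∃ (N : ℕ) (T : SimpleGraph (Fin N))
      (σ : V ≃ {x : Fin N // (T.neighborSet x).ncard ≤ 1}),
      T.IsTree ∧
      (∃ c : Fin N, ∀ x : Fin N, T.dist c x ≤ k) ∧
      (∀ x : Fin N, 1 < (T.neighborSet x).ncard →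
        ∀ S : Set V,
          (∀ a b : V, a ∈ S →
            (∃ w : T.Walk ((σ a : {x : Fin N // (T.neighborSet x).ncard ≤ 1}) : Fin N)
                ((σ b : {x : Fin N // (T.neighborSet x).ncard ≤ 1}) : Fin N),
              x ∉ w.support) → b ∈ S) →
          cutRank G S ≤ k)}

/-! ### Restrictions of collections, and the sets `C_F`, `L_F`, `R_F`, `D_F` -/

/-- The restriction `P|_{S}` of a collection of subsets of `V` to a subset `S`. -/
def restrictColl {V : Type u} (P : Set (Set V)) (S : Set V) : Set (Set S) :=
  {Y | ∃ X ∈ P, (Subtype.val ⁻¹' X : Set S).Nonempty ∧ Y = (Subtype.val ⁻¹' X : Set S)}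

/-- The restriction `F|_{S}` of a collection of pairs of subsets of `V` to a subset `S`. -/
def restrictF {V : Type u} (F : Set (Set V × Set V)) (S : Set V) : Set (Set S × Set S) :=
  {q | ∃ p ∈ F, (Subtype.val ⁻¹' p.1 : Set S).Nonempty ∧ (Subtype.val ⁻¹' p.2 : Set S).Nonempty ∧
      q = ((Subtype.val ⁻¹' p.1 : Set S), (Subtype.val ⁻¹' p.2 : Set S))}

/-- `C_F(X,X') = {Y ∈ P : (X,Y) ∈ F and (X',Y) ∈ F}`. -/
def CF {V : Type u} (P : Set (Set V)) (F : Set (Set V × Set V)) (X X' : Set V) : Set (Set V) :=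
  {Y ∈ P | (X, Y) ∈ F ∧ (X', Y) ∈ F}

/-- `L_F(X,X') = {Y ∈ P : (X,Y) ∈ F and (X',Y) ∉ F}`. -/
def LF {V : Type u} (P : Set (Set V)) (F : Set (Set V × Set V)) (X X' : Set V) : Set (Set V) :=
  {Y ∈ P | (X, Y) ∈ F ∧ (X', Y) ∉ F}

/-- `R_F(X,X') = {Y ∈ P : (X,Y) ∉ F and (X',Y) ∈ F}`. -/
def RF {V : Type u} (P : Set (Set V)) (F : Set (Set V × Set V)) (X X' : Set V) : Set (Set V) :=
  {Y ∈ P | (X, Y) ∉ F ∧ (X', Y) ∈ F}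

/-- `D_F(X,X') = (C×L) ∪ (C×R) ∪ (L×R) ∪ (L×C) ∪ (R×C) ∪ (R×L)`. -/
def DF {V : Type u} (P : Set (Set V)) (F : Set (Set V × Set V)) (X X' : Set V) :
    Set (Set V × Set V) :=
  (CF P F X X' ×ˢ LF P F X X') ∪ (CF P F X X' ×ˢ RF P F X X') ∪ (LF P F X X' ×ˢ RF P F X X') ∪
  (LF P F X X' ×ˢ CF P F X X') ∪ (RF P F X X' ×ˢ CF P F X X') ∪ (RF P F X X' ×ˢ LF P F X X')

/-- The set of `t` consecutive vertices of the path `P_s` starting at position `i` (0-indexed). -/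
def consec (s i t : ℕ) : Set (Fin s) := {x | i ≤ (x : ℕ) ∧ (x : ℕ) < i + t}

/-- An `(s,t)`-path: a graph isomorphic to the `X`-flip of `P_s` for a set `X` of `t`
consecutive vertices of `P_s`. -/
def IsSTPath (s t : ℕ) {W : Type v} (G : SimpleGraph W) : Prop :=
  ∃ i : ℕ, i + t ≤ s ∧ Nonempty (G ≃g setFlip (pathGraph s) (consec s i t))

/-!
Off `{u, v}`, pivoting an edge `uv` complements adjacency exactly between distinct classes
among `N(u) \ N(v)`, `N(v) \ N(u)` and `N(u) ∩ N(v)`. In the `X`-flip of `P` with `a, b ∈ X`,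
`N(a) = N_P(a) △ (X \ {a})`, so the pivot formula turns the claim into a polynomial identity
over GF(2) in the indicators of `X`, `N_P(a)`, `N_P(b)` and the edges of `P`. It holds because
the two cliques added on `N_P(a)` and `N_P(b)` never overlap each other or an edge of `P`:
`P` is triangle-free and `N_P[a] ∩ N_P[b] = ∅`.
-/

section

variable {V : Type*}

theorem sdFlip_adj (G : SimpleGraph V) {p : V → V → Prop} (hp : ∀ x y, p x y → p y x)
    {x y : V} : (sdFlip G p).Adj x y ↔ x ≠ y ∧ Xor (G.Adj x y) (p x y) := by
  have : p x y ∨ p y x ↔ p x y := ⟨fun h => h.elim id (hp y x), Or.inl⟩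
  change x ≠ y ∧ Xor (G.Adj x y) (p x y ∨ p y x) ↔ _
  rw [this]

theorem localComp_adj (G : SimpleGraph V) (w : V) {x y : V} :
    (localComp G w).Adj x y ↔ x ≠ y ∧ Xor (G.Adj x y) (G.Adj w x ∧ G.Adj w y) :=
  sdFlip_adj G fun _ _ h => h.symm

theorem localComp_adj_self (G : SimpleGraph V) (w x : V) :
    (localComp G w).Adj w x ↔ G.Adj w x := by
  rw [localComp_adj]
  grind [G.loopless.irrefl w, G.ne_of_adj]

theorem setFlip_adj (G : SimpleGraph V) (X : Set V) {x y : V} :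
    (setFlip G X).Adj x y ↔ x ≠ y ∧ Xor (G.Adj x y) (x ∈ X ∧ y ∈ X) :=
  sdFlip_adj G fun _ _ h => h.symm

theorem pivot_adj {G : SimpleGraph V} {u v x y : V} (huv : G.Adj u v) (hxu : x ≠ u)
    (hxv : x ≠ v) (hyu : y ≠ u) (hyv : y ≠ v) :
    (pivot G u v).Adj x y ↔
      x ≠ y ∧ Xor (G.Adj x y) (Xor (G.Adj u x ∧ G.Adj v y) (G.Adj u y ∧ G.Adj v x)) := by
  have hv : ∀ z, z ≠ v → ((localComp G u).Adj v z ↔ Xor (G.Adj v z) (G.Adj u z)) := by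
    intro z hz
    simp [localComp_adj, hz.symm, huv]
  have hu : ∀ z, z ≠ u → z ≠ v → ((localComp (localComp G u) v).Adj u z ↔ G.Adj v z) := by
    intro z hzu hzv
    rw [localComp_adj, localComp_adj_self, hv z hzv, hv u huv.ne]
    grind [G.irrefl, G.ne_of_adj, huv.symm]
  rw [pivot, localComp_adj, localComp_adj, localComp_adj, hu x hxu hxv, hu y hyu hyv, hv x hxv,
    hv y hyv]
  grind

theorem pivot_setFlip_induce_eq {P : SimpleGraph V} (hP : P.CliqueFree 3) {X : Set V} {a b : V}
    (ha : a ∈ X) (hb : b ∈ X)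
    (hab : insert a (P.neighborSet a) ∩ insert b (P.neighborSet b) = ∅) :
    (pivot (setFlip P X) a b).induce ({a, b}ᶜ : Set V) =
      setFlip
        (fromRel fun (x y : ({a, b}ᶜ : Set V)) =>
          P.Adj x y ∨ (↑x ∈ P.neighborSet a ∧ ↑y ∈ P.neighborSet a) ∨
            (↑x ∈ P.neighborSet b ∧ ↑y ∈ P.neighborSet b))
        (Subtype.val ⁻¹' symmDiff X (insert a (P.neighborSet a) ∪ insert b (P.neighborSet b))) := by
  have hdisj : ∀ z, z ∉ insert a (P.neighborSet a) ∩ insert b (P.neighborSet b) := by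
    simp [hab]
  have hne : a ≠ b := fun h => hdisj a ⟨Set.mem_insert a _, h ▸ Set.mem_insert a _⟩
  have hPab : ¬P.Adj a b := fun h => hdisj b ⟨Set.mem_insert_of_mem a h, Set.mem_insert b _⟩
  have hcommon : ∀ z, ¬(P.Adj a z ∧ P.Adj b z) := fun z h =>
    hdisj z ⟨Set.mem_insert_of_mem a h.1, Set.mem_insert_of_mem b h.2⟩
  have htri : ∀ w x y, P.Adj w x → P.Adj w y → x ≠ y → ¬P.Adj x y := fun w x y hx hy =>
    isIndepSet_neighborSet_of_triangleFree P hP w hx hy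
  have hGab : (setFlip P X).Adj a b := (setFlip_adj P X).2 ⟨hne, Or.inr ⟨⟨ha, hb⟩, hPab⟩⟩
  ext ⟨x, hx⟩ ⟨y, hy⟩
  simp only [Set.mem_compl_iff, Set.mem_insert_iff, Set.mem_singleton_iff, not_or] at hx hy
  rw [comap_adj, Function.Embedding.coe_subtype, pivot_adj hGab hx.1 hx.2 hy.1 hy.2, setFlip_adj,
    setFlip_adj, setFlip_adj, setFlip_adj, setFlip_adj, setFlip_adj, fromRel_adj]
  simp only [ne_eq, Subtype.mk.injEq, Set.mem_preimage, Set.mem_symmDiff, Set.mem_union,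
    Set.mem_insert_iff, mem_neighborSet, ha, hb, true_and]
  grind [P.adj_comm, P.ne_of_adj, hcommon x, hcommon y, htri a x y, htri b x y]

end

theorem stmt14 {n : ℕ} (X : Set (Fin n)) (a b : Fin n) (ha : a ∈ X) (hb : b ∈ X)
    (hab : (insert a ((pathGraph n).neighborSet a)) ∩
        (insert b ((pathGraph n).neighborSet b)) = ∅) :
    (pivot (setFlip (pathGraph n) X) a b).induce ({a, b}ᶜ : Set (Fin n)) =
      setFlip
        (SimpleGraph.fromRel (fun (x y : ({a, b}ᶜ : Set (Fin n))) =>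
          (pathGraph n).Adj (x : Fin n) (y : Fin n) ∨
          ((x : Fin n) ∈ (pathGraph n).neighborSet a ∧
            (y : Fin n) ∈ (pathGraph n).neighborSet a) ∨
          ((x : Fin n) ∈ (pathGraph n).neighborSet b ∧
            (y : Fin n) ∈ (pathGraph n).neighborSet b)))
        (Subtype.val ⁻¹' (symmDiff X
          ((insert a ((pathGraph n).neighborSet a)) ∪
            (insert b ((pathGraph n).neighborSet b))))) :=
  pivot_setFlip_induce_eq ((pathGraph.bicoloring n).colorable.cliqueFree (by simp)) ha hb hab
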